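/- arXiv:2105.14452 — 8 statements merged into one kernel-verified Lean document; each statement's English description precedes it below -/
import Mathlib

section
/- If a classifier model C = (S, f) is X-non-trivial for some X ⊆ Atm\Dec, then C is Y-non-trivial for every nonempty Y ⊆ Atm\Dec. -/
/-- `f` is `X`-non-trivial: there are states differing inside `X` that receive
different decision values. (The type `Atom` plays the role of the finite set
`Atm \ Dec` of non-decision atoms; a state is a subset of `Atm \ Dec`.) -/
def IsNonTrivial {Atom Val : Type} (f : Set Atom → Val) (X : Set Atom) : Prop :=
  ∃ s s' : Set Atom, s ∩ X ≠ s' ∩ X ∧ f s ≠ f s'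

/-- If a classifier model is `X`-non-trivial for some `X`, then it is
`Y`-non-trivial for every nonempty `Y ⊆ Atm \ Dec`. -/
theorem stmt3 {Atom Val : Type} [Fintype Atom] (f : Set Atom → Val)
    (X : Set Atom) (hX : IsNonTrivial f X) :
    ∀ Y : Set Atom, Y.Nonempty → IsNonTrivial f Y := by
  obtain ⟨s, s', _, hf⟩ := hX
  rintro Y ⟨y, hy⟩
  by_cases h : s ∩ Y = s' ∩ Y
  · -- toggle y in s'
    classical
    set t : Set Atom := if y ∈ s' then s' \ {y} else s' ∪ {y} with ht
    have hty : y ∈ t ↔ y ∉ s' := by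
      by_cases hys : y ∈ s' <;> simp [ht, hys]
    have htY : t ∩ Y ≠ s' ∩ Y := by
      intro heq
      have := Set.ext_iff.mp heq y
      simp [hy, hty] at this
    by_cases hft : f t = f s'
    · refine ⟨t, s, ?_, fun hc => hf (hft ▸ hc ▸ rfl)⟩
      intro heq
      have h1 := Set.ext_iff.mp heq y
      have h2 := Set.ext_iff.mp h y
      simp [hy, hty] at h1 h2
      tauto
    · exact ⟨t, s', htY, hft⟩
  · exact ⟨s, s', h, hf⟩
end

section
/- Let C = (S, f) be a classifier model that is Y-non-trivial for some Y ⊆ Atm\Dec and X-definite for some X ⊆ Atm\Dec, and let X' ⊆ Atm\Dec satisfy X ∩ X' = ∅. Then C is not X'-definite. -/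
/-- `f` is `X`-definite: states agreeing on `X` get the same decision value.
(The type `Atom` plays the role of the finite set `Atm \ Dec` of non-decision
atoms; a state is a subset of `Atm \ Dec`.) -/
def IsDefinite {Atom Val : Type} (f : Set Atom → Val) (X : Set Atom) : Prop :=
  ∀ s s' : Set Atom, s ∩ X = s' ∩ X → f s = f s'

/-- If a classifier model is `Y`-non-trivial for some `Y` and `X`-definite, and
`X ∩ X' = ∅`, then it is not `X'`-definite. -/
theorem stmt4 {Atom Val : Type} [Fintype Atom] (f : Set Atom → Val)
    (X X' Y : Set Atom) (hY : IsNonTrivial f Y) (hX : IsDefinite f X)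
    (hdisj : X ∩ X' = ∅) :
    ¬ IsDefinite f X' := by
  intro hX'
  obtain ⟨s, s', _, hfs⟩ := hY
  apply hfs
  have key : ∀ t : Set Atom, f t = f (∅ : Set Atom) := by
    intro t
    have h1 : f t = f (t ∩ X) := hX t (t ∩ X) (by
      rw [Set.inter_assoc, Set.inter_self])
    have h2 : f (t ∩ X) = f (∅ : Set Atom) := hX' (t ∩ X) ∅ (by
      rw [Set.inter_assoc, hdisj, Set.inter_empty, Set.empty_inter])
    rw [h1, h2]
  rw [key s, key s']
end

section
/- Let C = (S, f) be a classifier model, s ∈ S, X ⊆ Atm\Dec, and A, B ⊆ S. Then closest_X(s, A) ⊆ B if and only if for every k with 0 ≤ k ≤ |X|: if [there exists Y ⊆ X with |Y| = k and some s' ∈ A with s ∩ Y = s' ∩ Y, and for every Y ⊆ X with |Y| > k there is no s' ∈ A with s ∩ Y = s' ∩ Y], then for every Y ⊆ X with |Y| = k and every s' ∈ S with s ∩ Y = s' ∩ Y, s' ∈ A implies s' ∈ B. -/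
/-- The similarity between states `s` and `s'` relative to the feature set `X`:
the number of atoms of `X` on which `s` and `s'` agree. (The type `Atom` plays
the role of the finite set `Atm \ Dec`; a state is a subset of `Atm \ Dec`.) -/
noncomputable def simil {Atom : Type} (X s s' : Set Atom) : ℕ :=
  (X ∩ {p | p ∈ s ↔ p ∈ s'}).ncard

/-- The set of states in `A` that are closest (most similar relative to `X`)
to the state `s`. -/
def closest {Atom : Type} (X s : Set Atom) (A : Set (Set Atom)) : Set (Set Atom) :=
  {s' ∈ A | ∀ s'' ∈ A, simil X s s'' ≤ simil X s s'}

/-- `closest_X(s, A) ⊆ B` iff for every `k ≤ |X|`: if some `Y ⊆ X` of size `k`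
admits an `A`-state agreeing with `s` on `Y` while no larger `Y ⊆ X` does, then
every state agreeing with `s` on some `Y ⊆ X` of size `k` that lies in `A` lies
in `B`. -/
theorem stmt5 {Atom Val : Type} [Fintype Atom] (f : Set Atom → Val)
    (s : Set Atom) (X : Set Atom) (A B : Set (Set Atom)) :
    closest X s A ⊆ B ↔
      ∀ k : ℕ, k ≤ X.ncard →
        ((∃ Y : Set Atom, Y ⊆ X ∧ Y.ncard = k ∧ ∃ s' ∈ A, s ∩ Y = s' ∩ Y) ∧
          (∀ Y : Set Atom, Y ⊆ X → Y.ncard > k → ¬ ∃ s' ∈ A, s ∩ Y = s' ∩ Y)) →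
        ∀ Y : Set Atom, Y ⊆ X → Y.ncard = k →
          ∀ s' : Set Atom, s ∩ Y = s' ∩ Y → s' ∈ A → s' ∈ B := by
  have hfin : ∀ T : Set Atom, T.Finite := fun T => T.toFinite
  have key : ∀ s' Y : Set Atom, Y ⊆ X →
      (s ∩ Y = s' ∩ Y ↔ Y ⊆ X ∩ {p | p ∈ s ↔ p ∈ s'}) := by
    intro s' Y hY
    constructor
    · intro h p hp
      refine ⟨hY hp, ?_, ?_⟩
      · intro hs
        have : p ∈ s' ∩ Y := h ▸ ⟨hs, hp⟩
        exact this.1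
      · intro hs
        have : p ∈ s ∩ Y := h.symm ▸ ⟨hs, hp⟩
        exact this.1
    · intro h
      ext p
      constructor
      · rintro ⟨hs, hp⟩; exact ⟨(h hp).2.1 hs, hp⟩
      · rintro ⟨hs, hp⟩; exact ⟨(h hp).2.2 hs, hp⟩
  have self_agree : ∀ s' : Set Atom,
      s ∩ (X ∩ {p | p ∈ s ↔ p ∈ s'}) = s' ∩ (X ∩ {p | p ∈ s ↔ p ∈ s'}) := by
    intro s'
    exact (key s' _ Set.inter_subset_left).2 (le_refl _)
  constructor
  · rintro hcl k hk ⟨⟨Y0, hY0X, hY0k, s0, hs0A, hs0⟩, hmax⟩ Y hYX hYk s' hs' hs'A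
    apply hcl
    refine ⟨hs'A, ?_⟩
    intro s'' hs''A
    have h1 : k ≤ simil X s s' := by
      rw [← hYk]
      exact Set.ncard_le_ncard ((key s' Y hYX).1 hs') (hfin _)
    have h2 : simil X s s'' ≤ k := by
      by_contra h
      push_neg at h
      exact hmax _ Set.inter_subset_left h ⟨s'', hs''A, self_agree s''⟩
    omega
  · rintro h s' ⟨hs'A, hcl⟩
    set Y := X ∩ {p | p ∈ s ↔ p ∈ s'} with hYdef
    have hk : Y.ncard ≤ X.ncard := Set.ncard_le_ncard Set.inter_subset_left (hfin _)
    refine h Y.ncard hk ⟨⟨Y, Set.inter_subset_left, rfl, s', hs'A, self_agree s'⟩, ?_⟩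
      Y Set.inter_subset_left rfl s' (self_agree s') hs'A
    rintro Z hZX hZ ⟨s'', hs''A, hs''⟩
    have h1 : Z.ncard ≤ simil X s s'' :=
      Set.ncard_le_ncard ((key s'' Z hZX).1 hs'') (hfin _)
    have h2 := hcl s'' hs''A
    have h3 : simil X s s' = Y.ncard := rfl
    omega
end

section
/- Let C = (S, f) be a classifier model and X ⊆ Atm\Dec. If for every p ∈ Atm\Dec it holds that p ∈ X if and only if there exist x ∈ Val and a prime implicant λ of x with respect to f such that p ∈ Atm(λ), then C is X-essential. -/
/-- A term (property): a conjunction of literals, given by a pair of disjoint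
sets of atoms occurring positively (`pos`) and negatively (`neg`). (The type
`Atom` plays the role of the finite set `Atm \ Dec`; a state is a subset of
`Atm \ Dec`.) -/
structure CTerm (Atom : Type) where
  pos : Set Atom
  neg : Set Atom
  disj : pos ∩ neg = ∅

/-- A state `s` satisfies the term `t`. -/
def CTerm.sat {Atom : Type} (t : CTerm Atom) (s : Set Atom) : Prop :=
  t.pos ⊆ s ∧ t.neg ∩ s = ∅

/-- `Atm(t)`: the atoms occurring in the term `t`. -/
def CTerm.atoms {Atom : Type} (t : CTerm Atom) : Set Atom :=
  t.pos ∪ t.neg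

/-- `t'` is a part of `t`: the literal set of `t'` is a subset of that of `t`. -/
def PartOf {Atom : Type} (t' t : CTerm Atom) : Prop :=
  t'.pos ⊆ t.pos ∧ t'.neg ⊆ t.neg

/-- `t'` is a proper part of `t`: the literal set of `t'` is a strict subset of
that of `t`. -/
def ProperPartOf {Atom : Type} (t' t : CTerm Atom) : Prop :=
  PartOf t' t ∧ ¬ PartOf t t'

/-- `t` is an implicant of the decision value `x` w.r.t. `f`. -/
def IsImplicant {Atom Val : Type} (f : Set Atom → Val) (t : CTerm Atom)
    (x : Val) : Prop :=
  ∀ s : Set Atom, t.sat s → f s = x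

/-- `t` is a prime implicant of `x` w.r.t. `f`: an implicant no proper part of
which is an implicant of `x`. -/
def IsPrimeImplicant {Atom Val : Type} (f : Set Atom → Val) (t : CTerm Atom)
    (x : Val) : Prop :=
  IsImplicant f t x ∧ ∀ t' : CTerm Atom, ProperPartOf t' t → ¬ IsImplicant f t' x

/-- `f` is `X`-essential: for every non-decision atom `p`, `p ∈ X` iff `f` is
not `((Atm \ Dec) \ {p})`-definite. -/
def IsEssential {Atom Val : Type} (f : Set Atom → Val) (X : Set Atom) : Prop :=
  ∀ p : Atom, p ∈ X ↔ ¬ IsDefinite f ({p}ᶜ : Set Atom)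

lemma atoms_ssubset {Atom : Type} {t' t : CTerm Atom} (hpp : ProperPartOf t' t) :
    t'.atoms ⊂ t.atoms := by
  obtain ⟨⟨hp, hn⟩, hnp⟩ := hpp
  refine ⟨Set.union_subset_union hp hn, fun hsub => hnp ⟨?_, ?_⟩⟩
  · intro q hq
    rcases hsub (Or.inl hq) with h' | h'
    · exact h'
    · exact absurd (Set.eq_empty_iff_forall_notMem.mp t.disj q) (by simp [hq, hn h'])
  · intro q hq
    rcases hsub (Or.inr hq) with h' | h'
    · exact absurd (Set.eq_empty_iff_forall_notMem.mp t.disj q) (by simp [hq, hp h'])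
    · exact h'

lemma exists_prime_part {Atom Val : Type} [Fintype Atom] (f : Set Atom → Val) (x : Val)
    (t : CTerm Atom) (ht : IsImplicant f t x) :
    ∃ t', PartOf t' t ∧ IsPrimeImplicant f t' x := by
  classical
  generalize hn : (t.atoms.toFinite.toFinset).card = n
  induction n using Nat.strong_induction_on generalizing t with
  | _ n ih =>
    by_cases hp : ∀ t'' , ProperPartOf t'' t → ¬ IsImplicant f t'' x
    · exact ⟨t, ⟨subset_rfl, subset_rfl⟩, ht, hp⟩
    · push_neg at hp
      obtain ⟨t'', hpp, himp⟩ := hp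
      have hss : t''.atoms ⊂ t.atoms := atoms_ssubset hpp
      have hcard : (t''.atoms.toFinite.toFinset).card < n := by
        subst hn
        exact Finset.card_lt_card (Set.Finite.toFinset_ssubset_toFinset.mpr hss)
      obtain ⟨t3, hpt, hprime⟩ := ih _ hcard t'' himp rfl
      exact ⟨t3, ⟨hpt.1.trans hpp.1.1, hpt.2.trans hpp.1.2⟩, hprime⟩

/-- If `X` consists exactly of the atoms occurring in some prime implicant of
some decision value, then the classifier model is `X`-essential. -/
theorem stmt9 {Atom Val : Type} [Fintype Atom] (f : Set Atom → Val)
    (X : Set Atom)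
    (h : ∀ p : Atom, p ∈ X ↔
      ∃ (x : Val) (t : CTerm Atom), IsPrimeImplicant f t x ∧ p ∈ t.atoms) :
    IsEssential f X := by
  intro p
  rw [h p]
  constructor
  · -- forward: p occurs in a prime implicant ⇒ not definite
    rintro ⟨x, t, ⟨himp, hmin⟩, hpat⟩ hdef
    have hdisj := Set.eq_empty_iff_forall_notMem.mp t.disj
    rcases hpat with hpos | hneg
    · -- p ∈ t.pos
      set t' : CTerm Atom := ⟨t.pos \ {p}, t.neg, by
        rw [Set.eq_empty_iff_forall_notMem]
        rintro q ⟨⟨hq1, _⟩, hq2⟩; exact hdisj q ⟨hq1, hq2⟩⟩ with ht'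
      have hppo : ProperPartOf t' t := by
        refine ⟨⟨Set.diff_subset, subset_rfl⟩, fun hpo => ?_⟩
        exact (hpo.1 hpos).2 rfl
      have hni := hmin t' hppo
      rw [IsImplicant] at hni
      push_neg at hni
      obtain ⟨s, hsat, hfs⟩ := hni
      have hsat' : t.sat (s ∪ {p}) := by
        constructor
        · intro q hq
          by_cases hqp : q = p
          · exact Or.inr (by simp [hqp])
          · exact Or.inl (hsat.1 ⟨hq, hqp⟩)
        · rw [Set.eq_empty_iff_forall_notMem]
          rintro q ⟨hq1, hq2 | hq2⟩
          · exact Set.eq_empty_iff_forall_notMem.mp hsat.2 q ⟨hq1, hq2⟩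
          · simp only [Set.mem_singleton_iff] at hq2
            exact hdisj q ⟨hq2 ▸ hpos, hq1⟩
      have heq : s ∩ ({p}ᶜ : Set Atom) = (s ∪ {p}) ∩ ({p}ᶜ : Set Atom) := by
        ext q; simp only [Set.mem_inter_iff, Set.mem_union, Set.mem_compl_iff,
          Set.mem_singleton_iff]
        tauto
      exact hfs ((hdef s (s ∪ {p}) heq).trans (himp _ hsat'))
    · -- p ∈ t.neg
      set t' : CTerm Atom := ⟨t.pos, t.neg \ {p}, by
        rw [Set.eq_empty_iff_forall_notMem]
        rintro q ⟨hq1, hq2, _⟩; exact hdisj q ⟨hq1, hq2⟩⟩ with ht'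
      have hppo : ProperPartOf t' t := by
        refine ⟨⟨subset_rfl, Set.diff_subset⟩, fun hpo => ?_⟩
        exact (hpo.2 hneg).2 rfl
      have hni := hmin t' hppo
      rw [IsImplicant] at hni
      push_neg at hni
      obtain ⟨s, hsat, hfs⟩ := hni
      have hsat' : t.sat (s \ {p}) := by
        constructor
        · intro q hq
          refine ⟨hsat.1 hq, fun hqp => ?_⟩
          simp only [Set.mem_singleton_iff] at hqp
          exact hdisj q ⟨hq, hqp ▸ hneg⟩
        · rw [Set.eq_empty_iff_forall_notMem]
          rintro q ⟨hq1, hq2, hq3⟩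
          exact Set.eq_empty_iff_forall_notMem.mp hsat.2 q ⟨⟨hq1, hq3⟩, hq2⟩
      have heq : s ∩ ({p}ᶜ : Set Atom) = (s \ {p}) ∩ ({p}ᶜ : Set Atom) := by
        ext q; simp only [Set.mem_inter_iff, Set.mem_diff, Set.mem_compl_iff,
          Set.mem_singleton_iff]
        tauto
      exact hfs ((hdef s (s \ {p}) heq).trans (himp _ hsat'))
  · -- backward: not definite ⇒ p occurs in some prime implicant
    intro hnd
    rw [IsDefinite] at hnd
    push_neg at hnd
    obtain ⟨s, s', heq, hfs⟩ := hnd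
    set s0 : Set Atom := s ∩ {p}ᶜ with hs0
    set s1 : Set Atom := s0 ∪ {p} with hs1
    have hps0 : p ∉ s0 := by simp [hs0]
    have hmem : ∀ u : Set Atom, u ∩ ({p}ᶜ : Set Atom) = s0 → u = s0 ∨ u = s1 := by
      intro u hu
      by_cases hpu : p ∈ u
      · right; ext q
        by_cases hqp : q = p
        · simp [hs1, hqp, hpu]
        · have hq : (q ∈ u) = (q ∈ s0) := by
            rw [← hu]; simp [hqp]
          simp [hs1, hqp, hq]
      · left; ext q
        by_cases hqp : q = p
        · simp [hqp, hpu, hps0]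
        · have hq : (q ∈ u) = (q ∈ s0) := by
            rw [← hu]; simp [hqp]
          simp [hq]
    have h1 := hmem s hs0.symm
    have h2 := hmem s' heq.symm
    have hf01 : f s0 ≠ f s1 := by
      rcases h1 with h1 | h1 <;> rcases h2 with h2 | h2 <;> rw [h1, h2] at hfs
      · exact absurd rfl hfs
      · exact hfs
      · exact fun hc => hfs hc.symm
      · exact absurd rfl hfs
    set tf : CTerm Atom := ⟨s1, s1ᶜ, by simp⟩ with htf
    have himp : IsImplicant f tf (f s1) := by
      rintro u ⟨hu1, hu2⟩
      have : u = s1 := by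
        refine Set.Subset.antisymm ?_ hu1
        intro q hq
        by_contra hq'
        exact Set.eq_empty_iff_forall_notMem.mp hu2 q ⟨hq', hq⟩
      rw [this]
    obtain ⟨ts, hpart, hprime⟩ := exists_prime_part f (f s1) tf himp
    refine ⟨f s1, ts, hprime, ?_⟩
    by_contra hpat
    have hsat1 : ts.sat s1 := ⟨hpart.1, by
      rw [Set.eq_empty_iff_forall_notMem]; rintro q ⟨hq1, hq2⟩
      exact hpart.2 hq1 hq2⟩
    have hsat0 : ts.sat s0 := by
      constructor
      · intro q hq
        rcases hpart.1 hq with hq' | hq'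
        · exact hq'
        · simp only [Set.mem_singleton_iff] at hq'
          exact absurd (Or.inl (hq' ▸ hq)) hpat
      · rw [Set.eq_empty_iff_forall_notMem]
        rintro q ⟨hq1, hq2⟩
        exact hpart.2 hq1 (Or.inl hq2)
    exact hf01 ((hprime.1 s0 hsat0).trans (hprime.1 s1 hsat1).symm)
end

section
/- Let C = (S, f) be a classifier model, s ∈ S, λ a term, and x ∈ Val. Then CXp(λ, x) holds at s if and only if: s satisfies λ, f(s) = x, there exists s' ∈ S with s △ s' ⊆ Atm(λ) and f(s') ≠ x, and for every p ∈ Atm(λ) and every s'' ∈ S with s △ s'' ⊆ Atm(λ)\{p}, f(s'') = x. -/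
/-- `CXp f t x s`: the term `t` contrastively explains the decision `x` of `f`
at state `s`. -/
def CXp {Atom Val : Type} (f : Set Atom → Val) (t : CTerm Atom) (x : Val)
    (s : Set Atom) : Prop :=
  f s = x ∧ t.sat s ∧
    (∃ s' : Set Atom, symmDiff s s' = t.atoms ∧ f s' ≠ x) ∧
    ∀ s'' : Set Atom, symmDiff s s'' ⊂ t.atoms → f s'' = x

/-- Modal characterization of contrastive explanation: `CXp(t, x)` holds at `s`
iff `s` satisfies `t`, `f(s) = x`, some state within `Atm(t)` of `s` is
classified differently, and every state differing from `s` only inside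
`Atm(t) \ {p}` (for each `p ∈ Atm(t)`) is classified as `x`. -/
theorem stmt11 {Atom Val : Type} [Fintype Atom] (f : Set Atom → Val)
    (s : Set Atom) (t : CTerm Atom) (x : Val) :
    CXp f t x s ↔
      (t.sat s ∧ f s = x ∧
        (∃ s' : Set Atom, symmDiff s s' ⊆ t.atoms ∧ f s' ≠ x) ∧
        ∀ p ∈ t.atoms, ∀ s'' : Set Atom,
          symmDiff s s'' ⊆ t.atoms \ {p} → f s'' = x) := by
  constructor
  · rintro ⟨hfs, hsat, ⟨s', hd, hne⟩, hall⟩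
    refine ⟨hsat, hfs, ⟨s', hd.le, hne⟩, ?_⟩
    intro p hp s'' hsub
    apply hall
    refine ⟨hsub.trans Set.diff_subset, fun hle => ?_⟩
    exact (hsub (hle hp)).2 rfl
  · rintro ⟨hsat, hfs, ⟨s', hsub, hne⟩, hall⟩
    refine ⟨hfs, hsat, ⟨s', ?_, hne⟩, ?_⟩
    · by_contra hne'
      have hss : symmDiff s s' ⊂ t.atoms := hsub.ssubset_of_ne hne'
      obtain ⟨p, hp, hnp⟩ := Set.exists_of_ssubset hss
      exact hne (hall p hp s' (fun q hq => ⟨hss.1 hq, fun h => hnp (h ▸ hq)⟩))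
    · intro s'' hss
      obtain ⟨p, hp, hnp⟩ := Set.exists_of_ssubset hss
      exact hall p hp s'' (fun q hq => ⟨hss.1 hq, fun h => hnp (h ▸ hq)⟩)
end

section
/- Let C = (S, f) be a classifier model, s ∈ S, λ a term, and x ∈ Val. If CXp(λ, x) holds at s, then the counterfactual 'if λ̄ were true then the decision would not be x' holds at s; that is, closest_(Atm\Dec)(s, {s' ∈ S : s' satisfies λ̄}) ⊆ {s' ∈ S : f(s') ≠ x}. -/
/-- `t̄`: the term obtained by negating every literal of `t`. -/
def CTerm.flip {Atom : Type} (t : CTerm Atom) : CTerm Atom :=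
  ⟨t.neg, t.pos, by rw [Set.inter_comm]; exact t.disj⟩

/-- A contrastive explanation yields a counterfactual: if `CXp(t, x)` holds at
`s`, then all closest states satisfying `t̄` are not classified as `x`. -/
theorem stmt12 {Atom Val : Type} [Fintype Atom] (f : Set Atom → Val)
    (s : Set Atom) (t : CTerm Atom) (x : Val) (h : CXp f t x s) :
    closest (Set.univ : Set Atom) s {s' : Set Atom | t.flip.sat s'} ⊆
      {s' : Set Atom | f s' ≠ x} := by

  obtain ⟨hfs, ⟨hP, hN⟩, ⟨s₀, hd, hfx⟩, _⟩ := h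
  intro s' hs'
  obtain ⟨⟨hN', hP'⟩, hmax⟩ := hs'
  have hnotin : ∀ p ∈ t.neg, p ∉ s := fun p hp hc =>
    Set.eq_empty_iff_forall_notMem.mp hN p ⟨hp, hc⟩
  have hnotin' : ∀ p ∈ t.pos, p ∉ s' := fun p hp hc =>
    Set.eq_empty_iff_forall_notMem.mp hP' p ⟨hp, hc⟩
  have hs₀sat : t.flip.sat s₀ := by
    constructor
    · intro p hp
      have hmem : p ∈ symmDiff s s₀ := by rw [hd]; exact Or.inr hp
      rw [Set.mem_symmDiff] at hmem
      rcases hmem with ⟨h1, _⟩ | ⟨h1, _⟩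
      · exact absurd h1 (hnotin p hp)
      · exact h1
    · apply Set.eq_empty_iff_forall_notMem.mpr
      rintro p ⟨hp, hc⟩
      have hmem : p ∈ symmDiff s s₀ := by rw [hd]; exact Or.inl hp
      rw [Set.mem_symmDiff] at hmem
      rcases hmem with ⟨_, h2⟩ | ⟨_, h2⟩
      · exact h2 hc
      · exact h2 (hP hp)
  have hsub : t.atoms ⊆ symmDiff s s' := by
    rintro p (hp | hp) <;> rw [Set.mem_symmDiff]
    · exact Or.inl ⟨hP hp, hnotin' p hp⟩
    · exact Or.inr ⟨hN' hp, hnotin p hp⟩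
  have hsimil : ∀ s'' : Set Atom, simil Set.univ s s'' = (symmDiff s s'')ᶜ.ncard := by
    intro s''
    unfold simil
    congr 1
    ext p
    simp only [Set.mem_inter_iff, Set.mem_univ, true_and, Set.mem_setOf_eq,
      Set.mem_compl_iff, Set.mem_symmDiff]
    tauto
  have h1 : simil Set.univ s s₀ ≤ simil Set.univ s s' := hmax s₀ hs₀sat
  rw [hsimil, hsimil] at h1
  have h2 : (symmDiff s s').ncard + (symmDiff s s')ᶜ.ncard = Nat.card Atom :=
    Set.ncard_add_ncard_compl _
  have h3 : (symmDiff s s₀).ncard + (symmDiff s s₀)ᶜ.ncard = Nat.card Atom :=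
    Set.ncard_add_ncard_compl _
  have h4 : (symmDiff s s').ncard ≤ (symmDiff s s₀).ncard := by omega
  rw [hd] at h4
  have heq : t.atoms = symmDiff s s' :=
    Set.eq_of_subset_of_ncard_le hsub h4 (Set.toFinite _)
  have hss : symmDiff s s' = symmDiff s s₀ := by rw [← heq, hd]
  have : s' = s₀ := by
    have := congrArg (fun A => symmDiff s A) hss
    simpa [symmDiff_symmDiff_cancel_left] using this
  simpa [this] using hfx
end

section
/- Let C = (S, f) be a classifier model with a partition of Atm\Dec into protected features PF and non-protected features NF, let s ∈ S and x ∈ Val. Then Bias(x) holds at s if and only if there exists a term λ with Atm(λ) ⊆ PF such that CXp(λ, x) holds at s. -/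
/-- `Bias f PF x s`: the decision `x` of `f` at `s` is biased w.r.t. the set
`PF` of protected features. -/
def Bias {Atom Val : Type} (f : Set Atom → Val) (PF : Set Atom) (x : Val)
    (s : Set Atom) : Prop :=
  f s = x ∧ ∃ s' : Set Atom, symmDiff s s' ⊆ PF ∧ f s' ≠ x

/-- The decision at `s` is biased iff some term built from protected features
only contrastively explains it. -/
theorem stmt14 {Atom Val : Type} [Fintype Atom] (f : Set Atom → Val)
    (PF NF : Set Atom) (hunion : PF ∪ NF = (Set.univ : Set Atom))
    (hdisj : PF ∩ NF = ∅) (s : Set Atom) (x : Val) :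
    Bias f PF x s ↔ ∃ t : CTerm Atom, t.atoms ⊆ PF ∧ CXp f t x s := by
  constructor
  · rintro ⟨hfs, s', hsub, hne⟩
    -- consider minimal D ⊆ PF with f (s △ D) ≠ x
    classical
    have : Finite (Set Atom) := inferInstance
    set T : Set (Set Atom) := {D | D ⊆ PF ∧ f (symmDiff s D) ≠ x} with hT
    have hne' : (symmDiff s s') ∈ T := by
      refine ⟨hsub, ?_⟩
      rw [symmDiff_symmDiff_cancel_left]
      exact hne
    obtain ⟨D, hD, hmin⟩ : ∃ D ∈ T, ∀ D' ∈ T, id D' ≤ id D → id D = id D' := by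
      obtain ⟨D, hD, hmin⟩ := Set.Finite.exists_minimalFor id T (Set.toFinite T) ⟨_, hne'⟩
      exact ⟨D, hD, fun D' hD' h => le_antisymm (hmin hD' h) h⟩
    refine ⟨⟨s ∩ D, D \ s, by ext a; simp [Set.mem_inter_iff]; tauto⟩, ?_, ?_⟩
    · show (s ∩ D) ∪ (D \ s) ⊆ PF
      intro a ha
      have : a ∈ D := by rcases ha with h | h; exact h.2; exact h.1
      exact hD.1 this
    · have hatoms : (⟨s ∩ D, D \ s, by ext a; simp [Set.mem_inter_iff]; tauto⟩ :
          CTerm Atom).atoms = D := by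
        show (s ∩ D) ∪ (D \ s) = D
        ext a; simp [Set.mem_inter_iff, Set.mem_diff]; tauto
      refine ⟨hfs, ⟨Set.inter_subset_left, by ext a; simp⟩, ?_, ?_⟩
      · refine ⟨symmDiff s D, ?_, ?_⟩
        · rw [hatoms, symmDiff_symmDiff_cancel_left]
        · exact hD.2
      · intro s'' hss
        rw [hatoms] at hss
        by_contra hne''
        have hmem : (symmDiff s s'') ∈ T := by
          refine ⟨hss.1.trans hD.1, ?_⟩
          rw [symmDiff_symmDiff_cancel_left]
          exact hne''
        have := hmin _ hmem (le_of_lt hss)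
        simp only [id_eq] at this
        exact hss.2 this.le
  · rintro ⟨t, hPF, hfs, hsat, ⟨s', hsd, hne⟩, _⟩
    exact ⟨hfs, s', hsd ▸ hPF, hne⟩
end

section
/- For every formula φ of the dynamic language L^dyn(Atm) there exists a formula φ* of the static language L(Atm) such that φ ↔ φ* is valid relative to the class of classifier models (reduction of dynamic operators). -/
/-- Formulas of the static language `L(Atm)`. Atoms are either non-decision
atoms (`N`, playing the role of `Atm \ Dec`) or decision atoms `t(x)` for
`x : V` (playing the role of `Val`); so `Atm = N ⊕ V`. -/
inductive Form (N V : Type) : Type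
  | atom : N ⊕ V → Form N V
  | neg  : Form N V → Form N V
  | and  : Form N V → Form N V → Form N V
  | box  : Finset (N ⊕ V) → Form N V → Form N V

/-- Formulas of the dynamic language `L^dyn(Atm)`: `L(Atm)` extended with the
assignment operator `[x := ψ]χ` (constructor `assign x ψ χ`). -/
inductive DForm (N V : Type) : Type
  | atom : N ⊕ V → DForm N V
  | neg  : DForm N V → DForm N V
  | and  : DForm N V → DForm N V → DForm N V
  | box  : Finset (N ⊕ V) → DForm N V → DForm N V
  | assign : V → DForm N V → DForm N V → DForm N V

/-- Truth of a static formula at a pointed classifier model `(f, s)`. -/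
def Sat {N V : Type} (f : Set N → V) : Set N → Form N V → Prop
  | s, .atom (Sum.inl p) => p ∈ s
  | s, .atom (Sum.inr x) => f s = x
  | s, .neg φ => ¬ Sat f s φ
  | s, .and φ ψ => Sat f s φ ∧ Sat f s ψ
  | s, .box X φ =>
      ∀ s' : Set N, (∀ p : N, Sum.inl p ∈ X → (p ∈ s ↔ p ∈ s')) → Sat f s' φ

open Classical in
/-- Truth of a dynamic formula at a pointed classifier model `(f, s)`:
`[x := ψ]χ` holds at `(f, s)` iff `χ` holds at `(f^{x:=ψ}, s)`, where
`f^{x:=ψ}` classifies as `x` every state satisfying `ψ` and agrees with `f`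
elsewhere. -/
noncomputable def DSat {N V : Type} : (Set N → V) → Set N → DForm N V → Prop
  | _, s, .atom (Sum.inl p) => p ∈ s
  | f, s, .atom (Sum.inr x) => f s = x
  | f, s, .neg φ => ¬ DSat f s φ
  | f, s, .and φ ψ => DSat f s φ ∧ DSat f s ψ
  | f, s, .box X φ =>
      ∀ s' : Set N, (∀ p : N, Sum.inl p ∈ X → (p ∈ s ↔ p ∈ s')) → DSat f s' φ
  | f, s, .assign x ψ χ =>
      DSat (fun s' => if DSat f s' ψ then x else f s') s χ

open Classical in
lemma reduce_update {N V : Type} (x : V) (ψ : Form N V) (α : Form N V) :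
    ∃ β : Form N V, ∀ (f : Set N → V) (s : Set N),
      Sat (fun s' => if Sat f s' ψ then x else f s') s α ↔ Sat f s β := by
  induction α with
  | atom a =>
    cases a with
    | inl p => exact ⟨.atom (.inl p), fun f s => Iff.rfl⟩
    | inr y =>
      by_cases hyx : y = x
      · subst hyx
        refine ⟨.neg (.and (.neg ψ) (.neg (.atom (.inr y)))), fun f s => ?_⟩
        by_cases h : Sat f s ψ <;> simp [Sat, h]
      · refine ⟨.and (.neg ψ) (.atom (.inr y)), fun f s => ?_⟩
        by_cases h : Sat f s ψ
        · simp [Sat, h]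
          exact fun he => hyx he.symm
        · simp [Sat, h]
  | neg φ ih =>
    obtain ⟨β, hβ⟩ := ih
    exact ⟨.neg β, fun f s => not_congr (hβ f s)⟩
  | and φ₁ φ₂ ih₁ ih₂ =>
    obtain ⟨β₁, h₁⟩ := ih₁
    obtain ⟨β₂, h₂⟩ := ih₂
    exact ⟨.and β₁ β₂, fun f s => and_congr (h₁ f s) (h₂ f s)⟩
  | box X φ ih =>
    obtain ⟨β, hβ⟩ := ih
    refine ⟨.box X β, fun f s => ?_⟩
    show (∀ s', _ → _) ↔ (∀ s', _ → _)
    exact forall_congr' fun s' => imp_congr Iff.rfl (hβ f s')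

/-- Reduction of the dynamic language to the static one: for every formula `φ`
of `L^dyn(Atm)` there is a formula `φ*` of `L(Atm)` such that `φ ↔ φ*` is valid
relative to the class of classifier models. -/
theorem stmt19 {N V : Type} [DecidableEq N] [DecidableEq V] [Fintype N]
    [Fintype V] (φ : DForm N V) :
    ∃ φstar : Form N V, ∀ (f : Set N → V) (s : Set N),
      DSat f s φ ↔ Sat f s φstar := by

  induction φ with
  | atom a =>
    cases a with
    | inl p => exact ⟨.atom (.inl p), fun f s => Iff.rfl⟩
    | inr y => exact ⟨.atom (.inr y), fun f s => Iff.rfl⟩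
  | neg φ ih =>
    obtain ⟨β, hβ⟩ := ih
    exact ⟨.neg β, fun f s => not_congr (hβ f s)⟩
  | and φ₁ φ₂ ih₁ ih₂ =>
    obtain ⟨β₁, h₁⟩ := ih₁
    obtain ⟨β₂, h₂⟩ := ih₂
    exact ⟨.and β₁ β₂, fun f s => and_congr (h₁ f s) (h₂ f s)⟩
  | box X φ ih =>
    obtain ⟨β, hβ⟩ := ih
    refine ⟨.box X β, fun f s => ?_⟩
    show (∀ s', _ → _) ↔ (∀ s', _ → _)
    exact forall_congr' fun s' => imp_congr Iff.rfl (hβ f s')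
  | assign x ψ χ ihψ ihχ =>
    classical
    obtain ⟨ψs, hψ⟩ := ihψ
    obtain ⟨χs, hχ⟩ := ihχ
    obtain ⟨β, hβ⟩ := reduce_update x ψs χs
    refine ⟨β, fun f s => ?_⟩
    have hfun : (fun s' => if DSat f s' ψ then x else f s')
        = (fun s' => if Sat f s' ψs then x else f s') := by
      funext s'
      exact if_congr (hψ f s') rfl rfl
    show DSat (fun s' => if DSat f s' ψ then x else f s') s χ ↔ _
    rw [hfun, hχ _ s]
    exact hβ f s
end
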